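/- arXiv:1411.0782 — 2 statements merged into one kernel-verified Lean document; each statement's English description precedes it below -/
import Mathlib

section
/- If C and C' are two regular CRNs that share no intermediate species, then C ∪ C' is regular; moreover, every prime formal pathway of C ∪ C' is a prime formal pathway of C alone or of C' alone. -/
namespace CRNVerif

variable {σ : Type} [DecidableEq σ]

/-- A state is a multiset of species. -/
abbrev State (σ : Type) := Multiset σ
/-- A reaction is a pair (reactants, products) of multisets of species. -/
abbrev Reaction (σ : Type) := Multiset σ × Multiset σ
/-- A pathway is a finite sequence of reactions. -/
abbrev Pathway (σ : Type) := List (Reaction σ)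

/-- Result of applying reaction `r` in state `S` (i.e. `S ⊕ r`). -/
def applyRxn (S : State σ) (r : Reaction σ) : State σ := S - r.1 + r.2

/-- Minimal initial state of a pathway: the smallest state in which
its reactions can occur in succession. -/
def minInit : Pathway σ → State σ
  | [] => 0
  | r :: p => r.1 + (minInit p - r.2)

/-- State reached from `S` after performing all reactions of `p` in order. -/
def finalFrom (S : State σ) : Pathway σ → State σ
  | [] => S
  | r :: p => finalFrom (applyRxn S r) p

/-- The final state of a pathway (starting from its minimal initial state). -/
def finalState (p : Pathway σ) : State σ := finalFrom (minInit p) p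

/-- The state `S_i` after the first `i` reactions, starting from the minimal initial state. -/
def stateAt (p : Pathway σ) (i : ℕ) : State σ := finalFrom (minInit p) (p.take i)

/-- A state is formal if it contains only formal species (as given by `fm`). -/
def FormalState (fm : σ → Bool) (S : State σ) : Prop := ∀ x ∈ S, fm x = true

/-- `Formal(S)`: the multiset obtained by removing all intermediate species from `S`. -/
def formalPart (fm : σ → Bool) (S : State σ) : State σ := S.filter (fun x => fm x = true)

/-- A reaction is trivial if reactants equal products. -/
def TrivialRxn (r : Reaction σ) : Prop := r.1 = r.2

/-- A CRN is a (finite) set of nontrivial reactions. -/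
def NontrivialRxns (C : Finset (Reaction σ)) : Prop := ∀ r ∈ C, ¬ TrivialRxn r

/-- A formal CRN contains only formal reactions. -/
def IsFormalCRN (fm : σ → Bool) (C : Finset (Reaction σ)) : Prop :=
  ∀ r ∈ C, FormalState fm r.1 ∧ FormalState fm r.2

/-- `p` is a pathway of the CRN `C`. -/
def PathwayOf (C : Finset (Reaction σ)) (p : Pathway σ) : Prop := ∀ r ∈ p, r ∈ C

/-- `Interleave l₁ l₂ l`: `l` can be partitioned into the two (order-preserving,
not necessarily contiguous) subsequences `l₁` and `l₂`. -/
inductive Interleave {α : Type u} : List α → List α → List α → Prop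
  | nil : Interleave [] [] []
  | left {a : α} {l₁ l₂ l : List α} : Interleave l₁ l₂ l → Interleave (a :: l₁) l₂ (a :: l)
  | right {a : α} {l₁ l₂ l : List α} : Interleave l₁ l₂ l → Interleave l₁ (a :: l₂) (a :: l)

/-- `InterleaveMany qs p`: `p` is generated by interleaving the lists in `qs`. -/
inductive InterleaveMany {α : Type u} : List (List α) → List α → Prop
  | nil : InterleaveMany [] []
  | cons {q r p : List α} {qs : List (List α)} :
      Interleave q r p → InterleaveMany qs r → InterleaveMany (q :: qs) p

/-- A pathway is semiformal if its minimal initial state is formal. -/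
def Semiformal (fm : σ → Bool) (p : Pathway σ) : Prop := FormalState fm (minInit p)

/-- A formal pathway: a (nonempty) pathway whose minimal initial state and
final state are both formal. -/
def FormalPathway (fm : σ → Bool) (p : Pathway σ) : Prop :=
  p ≠ [] ∧ FormalState fm (minInit p) ∧ FormalState fm (finalState p)

/-- A formal pathway is decomposable if it can be partitioned into two nonempty
subsequences that are each formal pathways. -/
def FDecomposable (fm : σ → Bool) (p : Pathway σ) : Prop :=
  ∃ q₁ q₂, q₁ ≠ [] ∧ q₂ ≠ [] ∧ Interleave q₁ q₂ p ∧
    FormalPathway fm q₁ ∧ FormalPathway fm q₂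

/-- A prime formal pathway is a formal pathway that is not decomposable. -/
def PrimePathway (fm : σ → Bool) (p : Pathway σ) : Prop :=
  FormalPathway fm p ∧ ¬ FDecomposable fm p

/-- The formal basis: the set of (initial state, final state) pairs of prime
formal pathways of `C`. -/
def formalBasis (fm : σ → Bool) (C : Finset (Reaction σ)) : Set (Reaction σ) :=
  { r | ∃ p, PathwayOf C p ∧ PrimePathway fm p ∧ r = (minInit p, finalState p) }

/-- Two sets of reactions are equal up to addition/removal of trivial reactions. -/
def EqUpToTrivial (A B : Set (Reaction σ)) : Prop :=
  {r ∈ A | ¬ TrivialRxn r} = {r ∈ B | ¬ TrivialRxn r}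

/-- The reaction at (0-based) index `j` of `p` is a turning point:
before it only formal species of the initial state appear, from it on only formal
species of the final state appear, and at the moment the turning point fires,
no formal species are left over. -/
def TurningAt (fm : σ → Bool) (p : Pathway σ) (j : ℕ) : Prop :=
  ∃ h : j < p.length,
    (∀ i ≤ j, formalPart fm (stateAt p i) ≤ minInit p) ∧
    (∀ i, j < i → i ≤ p.length → formalPart fm (stateAt p i) ≤ finalState p) ∧
    formalPart fm (stateAt p j - (p.get ⟨j, h⟩).1) = 0

/-- A regular formal pathway: one that implements a formal reaction,
i.e. has a turning point. -/
def RegularPathway (fm : σ → Bool) (p : Pathway σ) : Prop :=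
  FormalPathway fm p ∧ ∃ j, TurningAt fm p j

/-- A CRN is regular if every prime formal pathway is regular. -/
def RegularCRN (fm : σ → Bool) (C : Finset (Reaction σ)) : Prop :=
  ∀ p, PathwayOf C p → PrimePathway fm p → RegularPathway fm p

/-- `q` is a strong closing pathway for `p` (within CRN `C`): it can occur in the
final state of `p`, consumes no formal species, and leads back to a formal state. -/
def ClosingPathway (fm : σ → Bool) (C : Finset (Reaction σ)) (p q : Pathway σ) : Prop :=
  PathwayOf C q ∧ minInit q ≤ finalState p ∧ (∀ r ∈ q, formalPart fm r.1 = 0) ∧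
  FormalState fm (finalFrom (finalState p) q)

/-- A CRN is strongly tidy if every semiformal pathway has a strong closing pathway. -/
def StronglyTidy (fm : σ → Bool) (C : Finset (Reaction σ)) : Prop :=
  ∀ p, PathwayOf C p → Semiformal fm p → ∃ q, ClosingPathway fm C p q

/-- A semiformal pathway is decomposable if it can be partitioned into two
nonempty subsequences that are each semiformal. -/
def SDecomposable (fm : σ → Bool) (p : Pathway σ) : Prop :=
  ∃ q₁ q₂, q₁ ≠ [] ∧ q₂ ≠ [] ∧ Interleave q₁ q₂ p ∧ Semiformal fm q₁ ∧ Semiformal fm q₂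

/-- The width of a pathway: the maximum size of the states it passes through. -/
def width (p : Pathway σ) : ℕ :=
  ((List.range (p.length + 1)).map (fun i => Multiset.card (stateAt p i))).foldr max 0

/-- The branching factor of a CRN. -/
def branching (C : Finset (Reaction σ)) : ℕ :=
  C.sup (fun r => max (Multiset.card r.1) (Multiset.card r.2))

/-- Formal state `T` is reachable from `S` via reactions of `C`. -/
def Reachable (C : Finset (Reaction σ)) (S T : State σ) : Prop :=
  ∃ p, PathwayOf C p ∧ minInit p ≤ S ∧ finalFrom S p = T

/-- `C` and `C'` share no intermediate species: any species occurring in both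
CRNs is formal. -/
def NoSharedIntermediates (fm : σ → Bool) (C C' : Finset (Reaction σ)) : Prop :=
  ∀ r ∈ C, ∀ r' ∈ C', ∀ x : σ, x ∈ r.1 + r.2 → x ∈ r'.1 + r'.2 → fm x = true

/-- The formal closure of a pathway: the minimal state containing the formal part
of every state along the pathway. -/
def formalClosure (fm : σ → Bool) (p : Pathway σ) : State σ :=
  ((List.range (p.length + 1)).map (fun i => formalPart fm (stateAt p i))).foldr (· ∪ ·) 0

/-- The decomposed final states of a semiformal pathway: all pairs of final
states arising from decompositions into two (nonempty) semiformal pathways. -/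
def DFS (fm : σ → Bool) (p : Pathway σ) : Set (State σ × State σ) :=
  { T | ∃ q₁ q₂, q₁ ≠ [] ∧ q₂ ≠ [] ∧ Interleave q₁ q₂ p ∧
        Semiformal fm q₁ ∧ Semiformal fm q₂ ∧ T = (finalState q₁, finalState q₂) }

/-- The minimal state containing the formal parts of all states strictly after index `j`. -/
def rfsAt (fm : σ → Bool) (p : Pathway σ) (j : ℕ) : State σ :=
  (((List.range (p.length + 1)).filter (fun i => j < i)).map
      (fun i => formalPart fm (stateAt p i))).foldr (· ∪ ·) 0

/-- The regular final states of a pathway: the minimal states `T` witnessed by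
potential turning point reactions. -/
def RFS (fm : σ → Bool) (p : Pathway σ) : Set (State σ) :=
  { T | ∃ j, ∃ h : j < p.length,
      (∀ i ≤ j, formalPart fm (stateAt p i) ≤ minInit p) ∧
      formalPart fm (stateAt p j - (p.get ⟨j, h⟩).1) = 0 ∧
      T = rfsAt fm p j }

/-- The signature of a semiformal pathway: (initial state, final state, width,
formal closure, DFS, RFS). -/
def signature (fm : σ → Bool) (p : Pathway σ) :
    State σ × State σ × ℕ × State σ × Set (State σ × State σ) × Set (State σ) :=
  (minInit p, finalState p, width p, formalClosure fm p, DFS fm p, RFS fm p)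

/-- An annotated prime pathway: exactly its chosen turning point is annotated,
with the corresponding formal basis reaction. -/
def GoodAnnotation (fm : σ → Bool) (ap : List (Reaction σ × Option (Reaction σ))) : Prop :=
  PrimePathway fm (ap.map Prod.fst) ∧
  ∃ j, TurningAt fm (ap.map Prod.fst) j ∧
    ap.map Prod.snd = (List.range ap.length).map
      (fun i => if i = j then
          some (minInit (ap.map Prod.fst), finalState (ap.map Prod.fst)) else none)

/-- `p` can be interpreted as `q`: `q` can occur in the initial state of `p`, has
the same net effect, and there is a decomposition of `p` into prime formal pathways
such that replacing a chosen turning point of each by the corresponding formal basis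
element and removing all other reactions yields `q`. -/
def Interpreted (fm : σ → Bool) (p q : Pathway σ) : Prop :=
  minInit q ≤ minInit p ∧
  finalFrom (minInit p) q = finalState p ∧
  ∃ ap : List (Reaction σ × Option (Reaction σ)),
    ap.map Prod.fst = p ∧ (ap.map Prod.snd).reduceOption = q ∧
    ∃ aps, InterleaveMany aps ap ∧ ∀ a ∈ aps, GoodAnnotation fm a

end CRNVerif

/-!
Split a prime formal pathway of `C ∪ C'` into the subsequence `q₁` of its `C`-reactions and the
subsequence `q₂` of the others, which lie in `C'`. An intermediate species occurring in `q₁` does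
not occur in `q₂`, so `q₂` neither supplies nor consumes it: it is absent from the minimal initial
state of `q₁` because it is absent from that of the whole pathway, and its net change along `q₁`
is its net change along the whole pathway, namely zero. Hence both halves are formal pathways, and
primality forces one of them to be empty.
-/

namespace CRNVerif

section Interleave

variable {α : Type u} {q₁ q₂ l : List α}

lemma Interleave.perm (h : Interleave q₁ q₂ l) : l.Perm (q₁ ++ q₂) := by
  induction h with
  | nil => simp
  | left _ ih => exact ih.cons _
  | right _ ih => exact (ih.cons _).trans List.perm_middle.symm

lemma Interleave.symm (h : Interleave q₁ q₂ l) : Interleave q₂ q₁ l := by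
  induction h with
  | nil => exact .nil
  | left _ ih => exact .right ih
  | right _ ih => exact .left ih

lemma interleave_filter (f : α → Bool) (l : List α) :
    Interleave (l.filter f) (l.filter fun a => !f a) l := by
  induction l with
  | nil => exact .nil
  | cons a l ih =>
    cases h : f a
    · simpa [List.filter_cons, h] using ih.right
    · simpa [List.filter_cons, h] using ih.left

end Interleave

section Species

variable {σ : Type}

def totalReactants (q : Pathway σ) : State σ := (q.map Prod.fst).sum

def totalProducts (q : Pathway σ) : State σ := (q.map Prod.snd).sum

def species (q : Pathway σ) : State σ := totalReactants q + totalProducts q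

lemma totalReactants_of_interleave {q₁ q₂ p : Pathway σ} (h : Interleave q₁ q₂ p) :
    totalReactants p = totalReactants q₁ + totalReactants q₂ := by
  simpa [totalReactants] using (h.perm.map Prod.fst).sum_eq

lemma totalProducts_of_interleave {q₁ q₂ p : Pathway σ} (h : Interleave q₁ q₂ p) :
    totalProducts p = totalProducts q₁ + totalProducts q₂ := by
  simpa [totalProducts] using (h.perm.map Prod.snd).sum_eq

lemma exists_mem_of_mem_species {C : Finset (Reaction σ)} {q : Pathway σ} {x : σ}
    (hq : PathwayOf C q) (hx : x ∈ species q) : ∃ r ∈ C, x ∈ r.1 + r.2 := by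
  induction q with
  | nil => simp [species, totalReactants, totalProducts] at hx
  | cons r q ih =>
    simp only [species, totalReactants, totalProducts, List.map_cons, List.sum_cons,
      Multiset.mem_add] at hx
    have hq' : PathwayOf C q := fun r' hr' => hq r' (List.mem_cons_of_mem r hr')
    rcases hx with (hx | hx) | (hx | hx)
    · exact ⟨r, hq r List.mem_cons_self, Multiset.mem_add.2 (.inl hx)⟩
    · exact ih hq' (Multiset.mem_add.2 (.inl hx))
    · exact ⟨r, hq r List.mem_cons_self, Multiset.mem_add.2 (.inr hx)⟩
    · exact ih hq' (Multiset.mem_add.2 (.inr hx))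

lemma NoSharedIntermediates.formal_of_mem_species {fm : σ → Bool} {C C' : Finset (Reaction σ)}
    {q q' : Pathway σ} (h : NoSharedIntermediates fm C C') (hq : PathwayOf C q)
    (hq' : PathwayOf C' q') : ∀ x, x ∈ species q → x ∈ species q' → fm x = true := by
  intro x hx hx'
  obtain ⟨r, hr, hxr⟩ := exists_mem_of_mem_species hq hx
  obtain ⟨r', hr', hxr'⟩ := exists_mem_of_mem_species hq' hx'
  exact h r hr r' hr' x hxr hxr'

end Species

variable {σ : Type} [DecidableEq σ]

lemma minInit_le_totalReactants (q : Pathway σ) : minInit q ≤ totalReactants q := by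
  induction q with
  | nil => simp [minInit, totalReactants]
  | cons r q ih =>
    simpa [minInit, totalReactants] using tsub_le_self.trans ih

lemma minInit_le_of_interleave {q₁ q₂ p : Pathway σ} (h : Interleave q₁ q₂ p) :
    minInit q₁ ≤ minInit p + totalProducts q₂ := by
  induction h with
  | nil => simp [minInit]
  | @left r q₁ q₂ p _ ih =>
    simp only [minInit, add_assoc]
    refine add_le_add_right (tsub_le_iff_right.2 ?_) _
    calc minInit q₁ ≤ minInit p - r.2 + r.2 + totalProducts q₂ :=
          ih.trans (by gcongr; exact le_tsub_add)
      _ = minInit p - r.2 + totalProducts q₂ + r.2 := add_right_comm _ _ _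
  | @right r q₁ q₂ p _ ih =>
    simp only [minInit, totalProducts, List.map_cons, List.sum_cons] at ih ⊢
    calc minInit q₁ ≤ minInit p - r.2 + r.2 + (q₂.map Prod.snd).sum :=
          ih.trans (by gcongr; exact le_tsub_add)
      _ ≤ r.1 + (minInit p - r.2 + r.2 + (q₂.map Prod.snd).sum) := le_add_self
      _ = r.1 + (minInit p - r.2) + (r.2 + (q₂.map Prod.snd).sum) := by ac_rfl

lemma finalFrom_add_totalReactants {p : Pathway σ} {S : State σ} (hS : minInit p ≤ S) :
    finalFrom S p + totalReactants p = S + totalProducts p := by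
  induction p generalizing S with
  | nil => simp [finalFrom, totalReactants, totalProducts]
  | cons r p ih =>
    simp only [minInit] at hS
    have hr : r.1 ≤ S := le_of_add_le_left hS
    have hp : minInit p ≤ S - r.1 + r.2 :=
      le_tsub_add.trans (add_le_add_left (le_tsub_of_add_le_left hS) _)
    simp only [finalFrom, applyRxn, totalReactants, totalProducts, List.map_cons,
      List.sum_cons] at ih ⊢
    calc finalFrom (S - r.1 + r.2) p + (r.1 + (p.map Prod.fst).sum)
        = S - r.1 + r.2 + (p.map Prod.snd).sum + r.1 := by
          rw [← ih hp, add_left_comm, add_comm]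
      _ = S - r.1 + r.1 + (r.2 + (p.map Prod.snd).sum) := by ac_rfl
      _ = S + (r.2 + (p.map Prod.snd).sum) := by rw [tsub_add_cancel_of_le hr]

lemma finalState_add_totalReactants (p : Pathway σ) :
    finalState p + totalReactants p = minInit p + totalProducts p :=
  finalFrom_add_totalReactants le_rfl

lemma formalState_iff_count_eq_zero {fm : σ → Bool} {S : State σ} :
    FormalState fm S ↔ ∀ x, fm x = false → S.count x = 0 := by
  simp only [FormalState, Multiset.count_eq_zero]
  exact ⟨fun h x hx hS => by simp [h x hS] at hx, fun h x hS => by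
    by_contra hx; exact h x (by simpa using hx) hS⟩

lemma FormalPathway.of_interleave {fm : σ → Bool} {q₁ q₂ p : Pathway σ}
    (hI : Interleave q₁ q₂ p) (hp : FormalPathway fm p) (hq₁ : q₁ ≠ [])
    (hdisj : ∀ x, x ∈ species q₁ → x ∈ species q₂ → fm x = true) :
    FormalPathway fm q₁ := by
  obtain ⟨-, hpInit, hpFinal⟩ := hp
  rw [formalState_iff_count_eq_zero] at hpInit hpFinal
  suffices h : ∀ x, fm x = false →
      (minInit q₁).count x = 0 ∧ (finalState q₁).count x = 0 by
    exact ⟨hq₁, formalState_iff_count_eq_zero.2 fun x hx => (h x hx).1,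
      formalState_iff_count_eq_zero.2 fun x hx => (h x hx).2⟩
  intro x hx
  have hq₁Init := Multiset.count_le_of_le x (minInit_le_totalReactants q₁)
  have hq₁Cons := congrArg (Multiset.count x) (finalState_add_totalReactants q₁)
  simp only [Multiset.count_add] at hq₁Cons
  by_cases hx₁ : x ∈ species q₁
  · have hx₂ : x ∉ species q₂ := fun hx₂ => by simp [hdisj x hx₁ hx₂] at hx
    simp only [species, Multiset.mem_add, not_or, ← Multiset.count_eq_zero] at hx₂
    have hq₁Init' := Multiset.count_le_of_le x (minInit_le_of_interleave hI)
    have hpCons := congrArg (Multiset.count x) (finalState_add_totalReactants p)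
    have hR := congrArg (Multiset.count x) (totalReactants_of_interleave hI)
    have hP := congrArg (Multiset.count x) (totalProducts_of_interleave hI)
    simp only [Multiset.count_add, hpInit x hx, hpFinal x hx] at hq₁Init' hpCons hR hP
    omega
  · simp only [species, Multiset.mem_add, not_or, ← Multiset.count_eq_zero] at hx₁
    omega

lemma PrimePathway.pathwayOf_or_of_union {fm : σ → Bool} {C C' : Finset (Reaction σ)}
    {p : Pathway σ} (hprime : PrimePathway fm p) (hdisj : NoSharedIntermediates fm C C')
    (hp : PathwayOf (C ∪ C') p) : PathwayOf C p ∨ PathwayOf C' p := by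
  by_contra! h
  obtain ⟨⟨r, hrp, hrC⟩, ⟨r', hr'p, hr'C'⟩⟩ : (∃ r ∈ p, r ∉ C) ∧ ∃ r ∈ p, r ∉ C' := by
    simpa [PathwayOf] using h
  set q₁ := p.filter (· ∈ C)
  set q₂ := p.filter fun r => !decide (r ∈ C)
  have hI : Interleave q₁ q₂ p := interleave_filter _ p
  have hq₁ : PathwayOf C q₁ := fun r hr => by simpa using (List.mem_filter.1 hr).2
  have hq₂ : PathwayOf C' q₂ := fun r hr => by
    obtain ⟨hrp, hrC⟩ := List.mem_filter.1 hr
    simpa using (Finset.mem_union.1 (hp r hrp)).resolve_left (by simpa using hrC)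
  have hr'C : r' ∈ C := (Finset.mem_union.1 (hp r' hr'p)).resolve_right hr'C'
  have hq₁ne : q₁ ≠ [] := List.ne_nil_of_mem (List.mem_filter.2 ⟨hr'p, by simpa using hr'C⟩)
  have hq₂ne : q₂ ≠ [] := List.ne_nil_of_mem (List.mem_filter.2 ⟨hrp, by simpa using hrC⟩)
  have hdisj₁₂ := hdisj.formal_of_mem_species hq₁ hq₂
  exact hprime.2 ⟨q₁, q₂, hq₁ne, hq₂ne, hI,
    hprime.1.of_interleave hI hq₁ne hdisj₁₂,
    hprime.1.of_interleave hI.symm hq₂ne fun x hx₂ hx₁ => hdisj₁₂ x hx₁ hx₂⟩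

theorem union_regular_general {σ : Type} [DecidableEq σ] (fm : σ → Bool)
    (C C' : Finset (Reaction σ))
    (hdisj : NoSharedIntermediates fm C C')
    (hr : RegularCRN fm C) (hr' : RegularCRN fm C') :
    RegularCRN fm (C ∪ C') ∧
    ∀ p, PathwayOf (C ∪ C') p → PrimePathway fm p →
      (PathwayOf C p ∨ PathwayOf C' p) := by
  have hsplit : ∀ p, PathwayOf (C ∪ C') p → PrimePathway fm p →
      PathwayOf C p ∨ PathwayOf C' p :=
    fun p hp hprime => hprime.pathwayOf_or_of_union hdisj hp
  refine ⟨fun p hp hprime => ?_, hsplit⟩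
  rcases hsplit p hp hprime with hC | hC'
  · exact hr p hC hprime
  · exact hr' p hC' hprime

/-- The union of two regular CRNs sharing no intermediate species is regular;
moreover every prime formal pathway of the union lies entirely in one of the two CRNs. -/
theorem union_regular {σ : Type} [DecidableEq σ] (fm : σ → Bool)
    (C C' : Finset (Reaction σ))
    (hC : NontrivialRxns C) (hC' : NontrivialRxns C')
    (hdisj : NoSharedIntermediates fm C C')
    (hr : RegularCRN fm C) (hr' : RegularCRN fm C') :
    RegularCRN fm (C ∪ C') ∧
    ∀ p, PathwayOf (C ∪ C') p → PrimePathway fm p →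
      (PathwayOf C p ∨ PathwayOf C' p) :=
  union_regular_general fm C C' hdisj hr hr'

end CRNVerif
end

section
/- If p is an undecomposable semiformal pathway of width w > 0 in a CRN with branching factor b, then there exists an undecomposable semiformal pathway of width strictly less than w but at least (w - b)/b. -/
namespace CRNVerif

variable {σ : Type} {fm : σ → Bool}

def intermediatePart (fm : σ → Bool) (S : State σ) : State σ := S.filter (fun x => fm x = false)

lemma intermediatePart_add (S T : State σ) :
    intermediatePart fm (S + T) = intermediatePart fm S + intermediatePart fm T :=
  Multiset.filter_add _ _ _

lemma intermediatePart_eq_zero_iff {S : State σ} :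
    intermediatePart fm S = 0 ↔ FormalState fm S := by
  simp [intermediatePart, Multiset.filter_eq_nil, FormalState]

lemma formalState_add_iff {S T : State σ} :
    FormalState fm (S + T) ↔ FormalState fm S ∧ FormalState fm T := by
  simp only [FormalState, Multiset.mem_add, or_imp, forall_and]

lemma FormalState.mono {S T : State σ} (h : FormalState fm T) (hST : S ≤ T) : FormalState fm S :=
  fun x hx => h x (Multiset.mem_of_le hST hx)

variable [DecidableEq σ]

lemma formalState_sub_iff {S T : State σ} :
    FormalState fm (S - T) ↔ intermediatePart fm S ≤ intermediatePart fm T := by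
  rw [← intermediatePart_eq_zero_iff, intermediatePart, Multiset.filter_sub, tsub_eq_zero_iff_le]
  rfl

lemma applyRxn_mono {S T : State σ} (r : Reaction σ) (h : S ≤ T) :
    applyRxn S r ≤ applyRxn T r :=
  add_le_add_left (tsub_le_tsub_right h _) _

lemma finalFrom_mono : ∀ (p : Pathway σ) {S T : State σ}, S ≤ T → finalFrom S p ≤ finalFrom T p
  | [], _, _, h => h
  | _ :: p, _, _, h => finalFrom_mono p (applyRxn_mono _ h)

lemma minInit_le_applyRxn {r : Reaction σ} {p : Pathway σ} {S : State σ}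
    (h : minInit (r :: p) ≤ S) : minInit p ≤ applyRxn S r := by
  refine le_trans ?_ (applyRxn_mono r h)
  show minInit p ≤ r.1 + (minInit p - r.2) - r.1 + r.2
  rw [add_tsub_cancel_left]
  exact le_tsub_add

lemma applyRxn_add {S : State σ} {r : Reaction σ} (T : State σ) (h : r.1 ≤ S) :
    applyRxn (S + T) r = applyRxn S r + T := by
  ext x
  have := Multiset.count_le_of_le x h
  simp only [applyRxn, Multiset.count_add, Multiset.count_sub]
  omega

lemma finalFrom_add : ∀ (p : Pathway σ) {S : State σ} (T : State σ), minInit p ≤ S →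
    finalFrom (S + T) p = finalFrom S p + T
  | [], _, _, _ => rfl
  | r :: p, _, T, h => by
    rw [finalFrom, applyRxn_add T (le_trans le_self_add h)]
    exact finalFrom_add p T (minInit_le_applyRxn h)

lemma finalState_cons (r : Reaction σ) (p : Pathway σ) :
    finalState (r :: p) = finalState p + (r.2 - minInit p) := by
  have h : applyRxn (minInit (r :: p)) r = minInit p + (r.2 - minInit p) := by
    ext x
    simp only [applyRxn, minInit, Multiset.count_add, Multiset.count_sub]
    omega
  rw [finalState, finalFrom, h, finalFrom_add p _ le_rfl, finalState]

lemma minInit_append (p q : Pathway σ) :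
    minInit (p ++ q) = minInit p + (minInit q - finalState p) := by
  induction p with
  | nil => simp [minInit, finalState, finalFrom]
  | cons r p ih =>
    rw [List.cons_append, minInit, ih, finalState_cons, minInit]
    ext x
    simp only [Multiset.count_add, Multiset.count_sub]
    omega

lemma minInit_take_le (p : Pathway σ) (i : ℕ) : minInit (p.take i) ≤ minInit p := by
  conv_rhs => rw [← List.take_append_drop i p, minInit_append]
  exact le_self_add

lemma semiformal_nil : Semiformal fm ([] : Pathway σ) := by
  simp [Semiformal, FormalState, minInit]

lemma not_sDecomposable_nil : ¬ SDecomposable fm ([] : Pathway σ) := by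
  rintro ⟨q₁, q₂, h₁, -, hI, -⟩
  cases hI
  exact h₁ rfl

lemma semiformal_append_singleton_iff {q : Pathway σ} {r : Reaction σ} :
    Semiformal fm (q ++ [r]) ↔
      Semiformal fm q ∧ intermediatePart fm r.1 ≤ intermediatePart fm (finalState q) := by
  have hr : minInit [r] = r.1 := by simp [minInit]
  rw [Semiformal, minInit_append, hr, formalState_add_iff, formalState_sub_iff, Semiformal]

namespace Interleave

variable {α : Type u}

lemma nil_right : ∀ (l : List α), Interleave l [] l
  | [] => .nil
  | _ :: l => .left (nil_right l)

lemma symm_s12 {l₁ l₂ l : List α} (h : Interleave l₁ l₂ l) : Interleave l₂ l₁ l := by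
  induction h with
  | nil => exact .nil
  | left _ ih => exact .right ih
  | right _ ih => exact .left ih

lemma length_eq {l₁ l₂ l : List α} (h : Interleave l₁ l₂ l) :
    l.length = l₁.length + l₂.length := by
  induction h with
  | nil => rfl
  | left _ ih => simp [ih]; omega
  | right _ ih => simp [ih]; omega

lemma sublist_left {l₁ l₂ l : List α} (h : Interleave l₁ l₂ l) : l₁.Sublist l := by
  induction h with
  | nil => exact .slnil
  | left _ ih => exact ih.cons_cons _
  | right _ ih => exact ih.cons _

lemma eq_of_nil_left {l₂ l : List α} (h : Interleave [] l₂ l) : l = l₂ := by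
  generalize hl₁ : ([] : List α) = l₁ at h
  induction h with
  | nil => rfl
  | left => cases hl₁
  | right _ ih => rw [ih hl₁]

lemma append_right {l₁ l₂ l : List α} (h : Interleave l₁ l₂ l) (t : List α) :
    Interleave l₁ (l₂ ++ t) (l ++ t) := by
  induction h with
  | nil => exact (nil_right t).symm_s12
  | left _ ih => exact .left ih
  | right _ ih => exact .right ih

lemma assoc {l₁ l₂ l l₃ l₄ : List α} (h : Interleave l₁ l₂ l) (h₂ : Interleave l₃ l₄ l₂) :
    ∃ m, Interleave l₃ m l ∧ Interleave l₁ l₄ m := by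
  induction h generalizing l₃ l₄ with
  | nil => cases h₂; exact ⟨[], .nil, .nil⟩
  | @left a _ _ _ _ ih =>
    obtain ⟨m, hm₁, hm₂⟩ := ih h₂
    exact ⟨a :: m, .right hm₁, .left hm₂⟩
  | @right a _ _ _ _ ih =>
    cases h₂ with
    | left h₂ =>
      obtain ⟨m, hm₁, hm₂⟩ := ih h₂
      exact ⟨m, .left hm₁, hm₂⟩
    | right h₂ =>
      obtain ⟨m, hm₁, hm₂⟩ := ih h₂
      exact ⟨a :: m, .right hm₁, .right hm₂⟩

lemma exists_take {l₁ l₂ l : List α} (h : Interleave l₁ l₂ l) (i : ℕ) :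
    ∃ i₁ ≤ l₁.length, ∃ i₂ ≤ l₂.length, Interleave (l₁.take i₁) (l₂.take i₂) (l.take i) := by
  induction h generalizing i with
  | nil => exact ⟨0, le_rfl, 0, le_rfl, by simpa using Interleave.nil⟩
  | left _ ih =>
    cases i with
    | zero => exact ⟨0, by simp, 0, by simp, .nil⟩
    | succ i =>
      obtain ⟨i₁, h₁, i₂, h₂, hI⟩ := ih i
      exact ⟨i₁ + 1, by simpa using h₁, i₂, h₂, .left hI⟩
  | right _ ih =>
    cases i with
    | zero => exact ⟨0, by simp, 0, by simp, .nil⟩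
    | succ i =>
      obtain ⟨i₁, h₁, i₂, h₂, hI⟩ := ih i
      exact ⟨i₁, h₁, i₂ + 1, by simpa using h₂, .right hI⟩

end Interleave

namespace InterleaveMany

variable {α : Type u}

lemma sublist {qs : List (List α)} {l : List α} (h : InterleaveMany qs l) :
    ∀ q ∈ qs, q.Sublist l := by
  induction h with
  | nil => simp
  | cons hI _ ih =>
    intro q hq
    rcases List.mem_cons.1 hq with rfl | hq
    · exact hI.sublist_left
    · exact (ih q hq).trans hI.symm_s12.sublist_left

lemma append {qs₁ qs₂ : List (List α)} {l₁ l₂ l : List α}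
    (h₁ : InterleaveMany qs₁ l₁) (h₂ : InterleaveMany qs₂ l₂) (hI : Interleave l₁ l₂ l) :
    InterleaveMany (qs₁ ++ qs₂) l := by
  induction h₁ generalizing l₂ l with
  | nil => simpa [hI.eq_of_nil_left] using h₂
  | cons hI₁ _ ih =>
    obtain ⟨m, hm₁, hm₂⟩ := hI.symm_s12.assoc hI₁
    exact .cons hm₁ (ih h₂ hm₂.symm_s12)

lemma exists_interleave_eraseIdx {qs : List (List α)} {l : List α} (h : InterleaveMany qs l)
    {j : ℕ} (hj : j < qs.length) :
    ∃ rest, Interleave qs[j] rest l ∧ InterleaveMany (qs.eraseIdx j) rest := by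
  induction h generalizing j with
  | nil => simp at hj
  | @cons q r _ _ hI hM ih =>
    cases j with
    | zero => exact ⟨r, hI, by simpa using hM⟩
    | succ j =>
      obtain ⟨rest, h₁, h₂⟩ := ih (by simpa using hj)
      obtain ⟨m, hm₁, hm₂⟩ := hI.assoc h₁
      exact ⟨m, by simpa using hm₁, .cons hm₂ h₂⟩

end InterleaveMany

lemma finalFrom_interleave {q₁ q₂ p : Pathway σ} (h : Interleave q₁ q₂ p) {S₁ S₂ : State σ}
    (h₁ : minInit q₁ ≤ S₁) (h₂ : minInit q₂ ≤ S₂) :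
    finalFrom (S₁ + S₂) p = finalFrom S₁ q₁ + finalFrom S₂ q₂ := by
  induction h generalizing S₁ S₂ with
  | nil => rfl
  | left _ ih =>
    rw [finalFrom, applyRxn_add _ (le_trans le_self_add h₁)]
    exact ih (minInit_le_applyRxn h₁) h₂
  | right _ ih =>
    rw [finalFrom, add_comm, applyRxn_add _ (le_trans le_self_add h₂), add_comm]
    exact ih h₁ (minInit_le_applyRxn h₂)

lemma minInit_interleave_le {q₁ q₂ p : Pathway σ} (h : Interleave q₁ q₂ p) :
    minInit p ≤ minInit q₁ + minInit q₂ := by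
  induction h with
  | nil => simp [minInit]
  | left _ ih | right _ ih =>
    rw [minInit, minInit, Multiset.le_iff_count]
    intro x
    have := Multiset.le_iff_count.1 ih x
    simp only [Multiset.count_add, Multiset.count_sub] at this ⊢
    omega

lemma Semiformal.interleave {q₁ q₂ p : Pathway σ} (h : Interleave q₁ q₂ p)
    (h₁ : Semiformal fm q₁) (h₂ : Semiformal fm q₂) : Semiformal fm p :=
  FormalState.mono (formalState_add_iff.2 ⟨h₁, h₂⟩) (minInit_interleave_le h)

/-- The surplus `minInit q₁ + minInit q₂ - minInit p` is formal, so it does not affect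
intermediate species. -/
lemma intermediatePart_finalState_interleave {q₁ q₂ p : Pathway σ} (h : Interleave q₁ q₂ p)
    (h₁ : Semiformal fm q₁) (h₂ : Semiformal fm q₂) :
    intermediatePart fm (finalState p) =
      intermediatePart fm (finalState q₁) + intermediatePart fm (finalState q₂) := by
  have hle := minInit_interleave_le h
  set D := minInit q₁ + minInit q₂ - minInit p
  have hD : intermediatePart fm D = 0 :=
    intermediatePart_eq_zero_iff.2 <|
      FormalState.mono (formalState_add_iff.2 ⟨h₁, h₂⟩) tsub_le_self
  have key : finalFrom (minInit p + D) p = finalState q₁ + finalState q₂ := by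
    rw [add_tsub_cancel_of_le hle]
    exact finalFrom_interleave h le_rfl le_rfl
  rw [finalFrom_add p D le_rfl] at key
  have := congrArg (intermediatePart fm) key
  rwa [intermediatePart_add, intermediatePart_add, hD, add_zero] at this

lemma semiformal_of_interleaveMany {qs : List (Pathway σ)} {p : Pathway σ}
    (h : InterleaveMany qs p) (hqs : ∀ q ∈ qs, Semiformal fm q) : Semiformal fm p := by
  induction h with
  | nil => exact semiformal_nil
  | cons hI _ ih =>
    exact (hqs _ List.mem_cons_self).interleave hI
      (ih fun q hq => hqs q (List.mem_cons_of_mem _ hq))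

lemma intermediatePart_finalState_interleaveMany {qs : List (Pathway σ)} {p : Pathway σ}
    (h : InterleaveMany qs p) (hqs : ∀ q ∈ qs, Semiformal fm q) :
    intermediatePart fm (finalState p) = (qs.map (intermediatePart fm ∘ finalState)).sum := by
  induction h with
  | nil => simp [intermediatePart, finalState, finalFrom, minInit]
  | cons hI hM ih =>
    have hqs' : ∀ q ∈ _, Semiformal fm q := fun q hq => hqs q (List.mem_cons_of_mem _ hq)
    rw [intermediatePart_finalState_interleave hI (hqs _ List.mem_cons_self)
      (semiformal_of_interleaveMany hM hqs'), ih hqs', List.map_cons, List.sum_cons]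
    rfl

lemma card_stateAt_le_width {p : Pathway σ} {i : ℕ} (h : i ≤ p.length) :
    Multiset.card (stateAt p i) ≤ width p :=
  List.le_max_of_le (List.mem_map_of_mem (List.mem_range.2 (Nat.lt_succ_of_le h))) le_rfl

lemma width_le_iff {p : Pathway σ} {n : ℕ} :
    width p ≤ n ↔ ∀ i ≤ p.length, Multiset.card (stateAt p i) ≤ n := by
  refine ⟨fun h i hi => (card_stateAt_le_width hi).trans h, fun h => ?_⟩
  refine List.max_le_of_forall_le _ _ fun x hx => ?_
  obtain ⟨i, hi, rfl⟩ := List.mem_map.1 hx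
  exact h i (Nat.le_of_lt_succ (List.mem_range.1 hi))

lemma width_nil : width ([] : Pathway σ) = 0 := by
  simp [width, stateAt, minInit, finalFrom]

lemma width_singleton (r : Reaction σ) :
    width [r] = max (Multiset.card r.1) (Multiset.card r.2) := by
  simp [width, stateAt, minInit, finalFrom, applyRxn, List.range_succ]

lemma width_interleave_le {q₁ q₂ p : Pathway σ} (h : Interleave q₁ q₂ p) :
    width p ≤ width q₁ + width q₂ := by
  refine width_le_iff.2 fun i _ => ?_
  obtain ⟨i₁, h₁, i₂, h₂, hI⟩ := h.exists_take i
  have hle : stateAt p i ≤ stateAt q₁ i₁ + stateAt q₂ i₂ :=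
    calc stateAt p i ≤ finalFrom (minInit q₁ + minInit q₂) (p.take i) :=
          finalFrom_mono _ (minInit_interleave_le h)
      _ = stateAt q₁ i₁ + stateAt q₂ i₂ :=
          finalFrom_interleave hI (minInit_take_le q₁ i₁) (minInit_take_le q₂ i₂)
  calc Multiset.card (stateAt p i) ≤ Multiset.card (stateAt q₁ i₁ + stateAt q₂ i₂) :=
        Multiset.card_le_card hle
    _ ≤ width q₁ + width q₂ := by
        rw [Multiset.card_add]
        exact add_le_add (card_stateAt_le_width h₁) (card_stateAt_le_width h₂)

lemma width_interleaveMany_le {qs : List (Pathway σ)} {p : Pathway σ}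
    (h : InterleaveMany qs p) : width p ≤ (qs.map width).sum := by
  induction h with
  | nil => simp [width_nil]
  | cons hI _ ih => simpa using (width_interleave_le hI).trans (Nat.add_le_add_left ih _)

lemma width_append_singleton_le (q : Pathway σ) (r : Reaction σ) :
    width (q ++ [r]) ≤ width q + max (Multiset.card r.1) (Multiset.card r.2) :=
  width_singleton r ▸ width_interleave_le ((Interleave.nil_right q).append_right [r])

lemma exists_interleaveMany_undecomposable (p : Pathway σ) (hs : Semiformal fm p) :
    ∃ qs : List (Pathway σ), InterleaveMany qs p ∧
      ∀ q ∈ qs, q ≠ [] ∧ Semiformal fm q ∧ ¬ SDecomposable fm q := by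
  by_cases hp : p = []
  · exact ⟨[], hp ▸ .nil, by simp⟩
  by_cases hd : SDecomposable fm p
  · obtain ⟨q₁, q₂, h₁, h₂, hI, hs₁, hs₂⟩ := hd
    have hlen := hI.length_eq
    have := List.length_pos_iff.2 h₁
    have := List.length_pos_iff.2 h₂
    obtain ⟨qs₁, hM₁, hqs₁⟩ := exists_interleaveMany_undecomposable q₁ hs₁
    obtain ⟨qs₂, hM₂, hqs₂⟩ := exists_interleaveMany_undecomposable q₂ hs₂
    exact ⟨qs₁ ++ qs₂, hM₁.append hM₂ hI,
      fun q hq => (List.mem_append.1 hq).elim (hqs₁ q) (hqs₂ q)⟩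
  · exact ⟨[p], .cons (Interleave.nil_right p) .nil, by simp [hp, hs, hd]⟩
termination_by p.length

lemma exists_le_sum_map_eraseIdx {α β : Type} [DecidableEq β] (f : α → Multiset β) :
    ∀ (l : List α) (s : Multiset β), s ≤ (l.map f).sum → Multiset.card s < l.length →
      ∃ j < l.length, s ≤ ((l.eraseIdx j).map f).sum
  | [], _, _, hc => absurd hc (Nat.not_lt_zero _)
  | a :: l, s, hs, hc => by
    have hsub : s - f a ≤ (l.map f).sum := tsub_le_iff_left.2 (by simpa using hs)
    by_cases heq : s - f a = s
    · exact ⟨0, by simp, by simpa [heq] using hsub⟩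
    · have hlt : Multiset.card (s - f a) < l.length := by
        have := Multiset.card_lt_card (lt_of_le_of_ne tsub_le_self heq)
        simp only [List.length_cons] at hc
        omega
      obtain ⟨j, hj, hle⟩ := exists_le_sum_map_eraseIdx f l (s - f a) hsub hlt
      exact ⟨j + 1, by simpa using hj,
        by simpa using le_add_tsub.trans (add_le_add (le_refl (f a)) hle)⟩

lemma length_le_card_of_not_sDecomposable {q : Pathway σ} {r : Reaction σ}
    {qs : List (Pathway σ)} (hs : Semiformal fm (q ++ [r])) (hu : ¬ SDecomposable fm (q ++ [r]))
    (hqs : InterleaveMany qs q) (hpieces : ∀ q' ∈ qs, q' ≠ [] ∧ Semiformal fm q') :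
    qs.length ≤ Multiset.card r.1 := by
  by_contra! hlt
  have hsemi : ∀ q' ∈ qs, Semiformal fm q' := fun q' hq' => (hpieces q' hq').2
  have hr := (semiformal_append_singleton_iff.1 hs).2
  rw [intermediatePart_finalState_interleaveMany hqs hsemi] at hr
  obtain ⟨j, hj, hle⟩ := exists_le_sum_map_eraseIdx _ qs _ hr
    ((Multiset.card_le_card (Multiset.filter_le _ _)).trans_lt hlt)
  obtain ⟨rest, hI, hM⟩ := hqs.exists_interleave_eraseIdx hj
  have hsemi' : ∀ q' ∈ qs.eraseIdx j, Semiformal fm q' :=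
    fun q' hq' => hsemi q' (List.mem_of_mem_eraseIdx hq')
  have hrest : Semiformal fm (rest ++ [r]) := by
    refine semiformal_append_singleton_iff.2 ⟨semiformal_of_interleaveMany hM hsemi', ?_⟩
    rwa [intermediatePart_finalState_interleaveMany hM hsemi']
  exact hu ⟨qs[j], rest ++ [r], (hpieces _ (List.getElem_mem hj)).1, by simp,
    hI.append_right [r], hsemi _ (List.getElem_mem hj), hrest⟩

lemma exists_shorter_undecomposable_width_le {C : Finset (Reaction σ)} {p : Pathway σ}
    (hp : PathwayOf C p) (hs : Semiformal fm p) (hu : ¬ SDecomposable fm p) (hne : p ≠ []) :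
    ∃ p' : Pathway σ, PathwayOf C p' ∧ Semiformal fm p' ∧ ¬ SDecomposable fm p' ∧
      p'.length < p.length ∧ width p ≤ branching C * width p' + branching C := by
  obtain ⟨q, r, rfl⟩ := (List.eq_nil_or_concat' p).resolve_left hne
  have hbr : max (Multiset.card r.1) (Multiset.card r.2) ≤ branching C :=
    Finset.le_sup (f := fun r : Reaction σ => max (Multiset.card r.1) (Multiset.card r.2))
      (hp r (by simp))
  obtain ⟨qs, hqs, hpieces⟩ :=
    exists_interleaveMany_undecomposable q (semiformal_append_singleton_iff.1 hs).1
  have hwidth : width (q ++ [r]) ≤ (qs.map width).sum + branching C :=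
    (width_append_singleton_le q r).trans (add_le_add (width_interleaveMany_le hqs) hbr)
  rcases eq_or_ne qs [] with rfl | hne
  · refine ⟨[], by simp [PathwayOf], semiformal_nil, not_sDecomposable_nil, by simp, ?_⟩
    simpa [width_nil] using hwidth
  obtain ⟨q', hq', hmax⟩ :=
    qs.toFinset.exists_max_image width ((List.toFinset_nonempty_iff _).2 hne)
  rw [List.mem_toFinset] at hq'
  have hm : qs.length ≤ branching C :=
    (length_le_card_of_not_sDecomposable hs hu hqs fun q' hq' =>
      ⟨(hpieces q' hq').1, (hpieces q' hq').2.1⟩).trans ((le_max_left _ _).trans hbr)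
  have hsum : (qs.map width).sum ≤ qs.length * width q' := by
    simpa using List.sum_le_card_nsmul (qs.map width) (width q')
      (by simpa using fun a ha => hmax a (List.mem_toFinset.2 ha))
  have hsub := hqs.sublist q' hq'
  refine ⟨q', fun a ha => hp a (List.mem_append_left _ (hsub.subset ha)), (hpieces q' hq').2.1,
    (hpieces q' hq').2.2, hsub.length_le.trans_lt (by simp), ?_⟩
  calc width (q ++ [r]) ≤ qs.length * width q' + branching C := by omega
    _ ≤ branching C * width q' + branching C := by gcongr

lemma exists_width_lt_le_of_le_width {C : Finset (Reaction σ)} {p : Pathway σ}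
    (hp : PathwayOf C p) (hs : Semiformal fm p) (hu : ¬ SDecomposable fm p)
    {w : ℕ} (hw : 0 < w) (hwp : w ≤ width p) :
    ∃ p' : Pathway σ, PathwayOf C p' ∧ Semiformal fm p' ∧ ¬ SDecomposable fm p' ∧
      width p' < w ∧ w ≤ branching C * width p' + branching C := by
  have hne : p ≠ [] := by
    rintro rfl
    rw [width_nil] at hwp
    omega
  obtain ⟨p', hp', hs', hu', hlen, hwidth⟩ := exists_shorter_undecomposable_width_le hp hs hu hne
  by_cases hlt : width p' < w
  · exact ⟨p', hp', hs', hu', hlt, hwp.trans hwidth⟩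
  · exact exists_width_lt_le_of_le_width hp' hs' hu' hw (not_lt.1 hlt)
termination_by p.length

theorem exists_smaller_width_undecomposable_general {σ : Type} [DecidableEq σ] (fm : σ → Bool)
    (C : Finset (Reaction σ))
    (p : Pathway σ) (hp : PathwayOf C p) (hs : Semiformal fm p)
    (hu : ¬ SDecomposable fm p) (hw : 0 < width p) :
    ∃ p' : Pathway σ, PathwayOf C p' ∧ Semiformal fm p' ∧ ¬ SDecomposable fm p' ∧
      width p' < width p ∧ width p ≤ branching C * width p' + branching C :=
  exists_width_lt_le_of_le_width hp hs hu hw le_rfl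

/-- From an undecomposable semiformal pathway of width `w > 0` one obtains an
undecomposable semiformal pathway of width `< w` but `≥ (w - b)/b`, where `b` is
the branching factor. -/
theorem exists_smaller_width_undecomposable {σ : Type} [DecidableEq σ] (fm : σ → Bool)
    (C : Finset (Reaction σ)) (hC : NontrivialRxns C)
    (p : Pathway σ) (hp : PathwayOf C p) (hs : Semiformal fm p)
    (hu : ¬ SDecomposable fm p) (hw : 0 < width p) :
    ∃ p' : Pathway σ, PathwayOf C p' ∧ Semiformal fm p' ∧ ¬ SDecomposable fm p' ∧
      width p' < width p ∧ width p ≤ branching C * width p' + branching C :=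
  exists_smaller_width_undecomposable_general fm C p hp hs hu hw

end CRNVerif
end
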